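/- arXiv:2412.11118 — 2 statements merged into one kernel-verified Lean document; each statement's English description precedes it below -/
import Mathlib

section
/- The map f has a fixed point in ℝ^n. -/
open Matrix Filter

theorem stmt0 (n : ℕ) (hn : 2 ≤ n) (A : Matrix (Fin n) (Fin n) ℝ) (b c : Fin n → ℝ)
    (f : (Fin n → ℝ) → (Fin n → ℝ))
    (hf : ∀ x : Fin n → ℝ, f x = A.mulVec x + |x ⟨0, by omega⟩| • b + c)
    (hP : LinearIndependent ℝ
      (fun j : Fin (n - 1) => fun i : Fin n => (1 - A) i ⟨j.1 + 1, by have := j.2; omega⟩))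
    (x : Fin n → ℝ)
    (hx : ¬ Tendsto (fun k => ‖f^[k] x‖) atTop atTop) :
    ∃ y : Fin n → ℝ, f y = y := by
  obtain ⟨m, rfl⟩ : ∃ m, n = m + 2 := ⟨n - 2, by omega⟩
  set M : Matrix (Fin (m + 2)) (Fin (m + 2)) ℝ := 1 - A with hM
  set col : Fin (m + 2) → (Fin (m + 2) → ℝ) := fun j i => M i j with hcol
  have hPli : LinearIndependent ℝ (fun k : Fin (m + 1) => col k.succ) := hP
  set S : Submodule ℝ (Fin (m + 2) → ℝ) :=
    Submodule.span ℝ (Set.range (fun k : Fin (m + 1) => col k.succ)) with hS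
  have hSrank : Module.finrank ℝ S = m + 1 := by
    rw [finrank_span_eq_card hPli]; simp
  have htot : Module.finrank ℝ (Fin (m + 2) → ℝ) = m + 2 := by
    simp [Module.finrank_fintype_fun_eq_card]
  have hSne : S ≠ ⊤ := by
    intro h
    rw [h, finrank_top, htot] at hSrank
    omega
  obtain ⟨u, hu⟩ : ∃ u, u ∉ S := by
    by_contra! h
    exact hSne (by ext w; simp [h w])
  obtain ⟨φ, hφu, hφmap⟩ := S.exists_dual_map_eq_bot_of_notMem hu inferInstance
  have hφS : ∀ w ∈ S, φ w = 0 := by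
    intro w hw
    have : φ w ∈ S.map φ := Submodule.mem_map_of_mem hw
    rw [hφmap, Submodule.mem_bot] at this
    exact this
  have hker : LinearMap.ker φ = S := by
    symm
    refine Submodule.eq_of_le_of_finrank_eq (fun w hw => LinearMap.mem_ker.mpr (hφS w hw)) ?_
    have hrn := LinearMap.finrank_range_add_finrank_ker φ
    have hrne : LinearMap.range φ ≠ ⊥ := by
      intro h
      have : φ u ∈ LinearMap.range φ := ⟨u, rfl⟩
      rw [h, Submodule.mem_bot] at this
      exact hφu this
    have hle : Module.finrank ℝ (LinearMap.range φ) ≤ 1 := by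
      have := Submodule.finrank_le (LinearMap.range φ)
      simpa using this
    have hne0 : Module.finrank ℝ (LinearMap.range φ) ≠ 0 := by
      intro h
      exact hrne (Submodule.finrank_eq_zero.mp h)
    rw [htot] at hrn
    omega
  set α : ℝ := φ (col 0) with hα
  set β : ℝ := φ b with hβ
  set γ : ℝ := φ c with hγ
  have hmulVec : ∀ v : Fin (m + 2) → ℝ, M.mulVec v = ∑ j, v j • col j := by
    intro v
    funext i
    simp only [Matrix.mulVec, dotProduct, Finset.sum_apply, Pi.smul_apply, smul_eq_mul, hcol]
    exact Finset.sum_congr rfl (fun j _ => mul_comm _ _)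
  have hφM : ∀ v : Fin (m + 2) → ℝ, φ (M.mulVec v) = v 0 * α := by
    intro v
    rw [hmulVec, map_sum, Fin.sum_univ_succ]
    have h0 : ∀ k : Fin (m + 1), φ (v k.succ • col k.succ) = 0 := by
      intro k
      rw [_root_.map_smul, hφS (col k.succ) (Submodule.subset_span ⟨k, rfl⟩), smul_zero]
    rw [Finset.sum_congr rfl (fun k _ => h0 k)]
    simp [hα]
  have hφf : ∀ v : Fin (m + 2) → ℝ, φ (f v) = φ v + (γ - (α * v 0 - β * |v 0|)) := by
    intro v
    have hAv : A.mulVec v = v - M.mulVec v := by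
      rw [hM, Matrix.sub_mulVec, Matrix.one_mulVec]
      abel
    rw [hf v, hAv]
    have h1 : (v - M.mulVec v + |v ⟨0, by omega⟩| • b + c) =
        v - M.mulVec v + |v 0| • b + c := rfl
    rw [h1]
    simp only [map_add, map_sub, _root_.map_smul, smul_eq_mul, hφM v, ← hβ, ← hγ]
    ring
  by_cases hsol : ∃ t : ℝ, α * t - β * |t| = γ
  · -- construct the fixed point
    obtain ⟨t, ht⟩ := hsol
    set w : Fin (m + 2) → ℝ := |t| • b + c - t • col 0 with hw
    have hwS : w ∈ S := by
      rw [← hker, LinearMap.mem_ker]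
      simp only [hw, map_sub, map_add, _root_.map_smul, smul_eq_mul, ← hα, ← hβ, ← hγ]
      linarith [ht]
    rw [hS, Submodule.mem_span_range_iff_exists_fun ℝ] at hwS
    obtain ⟨d, hd⟩ := hwS
    refine ⟨Fin.cons t d, ?_⟩
    set y : Fin (m + 2) → ℝ := Fin.cons t d with hy
    have hy0 : y 0 = t := rfl
    have hMy : M.mulVec y = |t| • b + c := by
      rw [hmulVec, Fin.sum_univ_succ]
      have h2 : ∑ k : Fin (m + 1), y k.succ • col k.succ = w := by
        rw [← hd]
        exact Finset.sum_congr rfl (fun k _ => by rw [hy, Fin.cons_succ])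
      rw [h2, hy0, hw]
      abel
    have hAy : A.mulVec y = y - M.mulVec y := by
      rw [hM, Matrix.sub_mulVec, Matrix.one_mulVec]
      abel
    rw [hf y, hAy, hMy]
    show y - (|t| • b + c) + |y 0| • b + c = y
    rw [hy0]
    abel
  · exfalso
    push_neg at hsol
    apply hx
    have main : ∀ ψ : Module.Dual ℝ (Fin (m + 2) → ℝ),
        (∀ v, ψ (f v) = ψ v + (ψ c - (ψ (col 0) * v 0 - ψ b * |v 0|))) →
        (∀ t : ℝ, ψ (col 0) * t - ψ b * |t| ≠ ψ c) → 0 < ψ c →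
        Tendsto (fun k => ‖f^[k] x‖) atTop atTop := by
      intro ψ hψf hψsol hψc
      set a' : ℝ := ψ (col 0) with ha'
      set b' : ℝ := ψ b with hb'
      set c' : ℝ := ψ c with hc'
      have hab1 : a' - b' ≤ 0 := by
        by_contra h
        push_neg at h
        apply hψsol (c' / (a' - b'))
        have ht : 0 ≤ c' / (a' - b') := div_nonneg hψc.le h.le
        rw [abs_of_nonneg ht]
        field_simp
      have hab2 : 0 ≤ a' + b' := by
        by_contra h
        push_neg at h
        apply hψsol (c' / (a' + b'))
        have ht : c' / (a' + b') ≤ 0 := div_nonpos_of_nonneg_of_nonpos hψc.le h.le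
        rw [abs_of_nonpos ht]
        have hne : a' + b' ≠ 0 := h.ne
        field_simp
        ring
      have hg : ∀ t : ℝ, c' ≤ c' - (a' * t - b' * |t|) := by
        intro t
        rcases le_or_gt 0 t with h | h
        · rw [abs_of_nonneg h]; nlinarith
        · rw [abs_of_neg h]; nlinarith
      have hmono : ∀ k : ℕ, ψ x + k * c' ≤ ψ (f^[k] x) := by
        intro k
        induction k with
        | zero => simp
        | succ k ih =>
          rw [Function.iterate_succ_apply', hψf]
          have := hg ((f^[k] x) 0)
          push_cast
          linarith
      set Ψ := LinearMap.toContinuousLinearMap ψ with hΨ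
      have hΨeq : ∀ v, Ψ v = ψ v := fun v => rfl
      have hΨpos : 0 < ‖Ψ‖ := by
        by_contra h
        push_neg at h
        have h0 : ‖Ψ‖ = 0 := le_antisymm h (norm_nonneg _)
        have := Ψ.le_opNorm c
        rw [h0, zero_mul] at this
        have : ψ c = 0 := by
          have h2 : ‖Ψ c‖ = 0 := le_antisymm this (norm_nonneg _)
          rw [hΨeq] at h2
          simpa using h2
        linarith
      have hlow : ∀ k : ℕ, (ψ x + k * c') / ‖Ψ‖ ≤ ‖f^[k] x‖ := by
        intro k
        rw [div_le_iff₀ hΨpos]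
        calc ψ x + k * c' ≤ ψ (f^[k] x) := hmono k
          _ ≤ |ψ (f^[k] x)| := le_abs_self _
          _ = ‖Ψ (f^[k] x)‖ := by rw [hΨeq]; simp
          _ ≤ ‖Ψ‖ * ‖f^[k] x‖ := Ψ.le_opNorm _
          _ = ‖f^[k] x‖ * ‖Ψ‖ := mul_comm _ _
      refine tendsto_atTop_mono hlow ?_
      apply Tendsto.atTop_div_const hΨpos
      apply tendsto_atTop_add_const_left
      exact Tendsto.atTop_mul_const hψc tendsto_natCast_atTop_atTop
    have hγ0 : γ ≠ 0 := fun h => hsol 0 (by simp [h])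
    rcases hγ0.lt_or_gt with h | h
    · refine main (-φ) ?_ ?_ ?_
      · intro v
        simp only [LinearMap.neg_apply, hφf v, ← hα, ← hβ, ← hγ]
        ring
      · intro t hteq
        simp only [LinearMap.neg_apply, ← hα, ← hβ, ← hγ] at hteq
        exact hsol t (by linarith)
      · simpa [LinearMap.neg_apply, ← hγ] using h
    · refine main φ ?_ ?_ ?_
      · intro v
        rw [hφf v, ← hα, ← hβ, ← hγ]
      · intro t hteq
        rw [← hα, ← hβ, ← hγ] at hteq
        exact hsol t hteq
      · rw [← hγ]; exact h
end

section
/- With A, b, c as in the specified 3-dimensional example, the map f(x) = A x + b|x₁| + c has no fixed point, yet for each s ∈ ℝ the point x = (−2/15, −7/5, s) satisfies f³(x) = x, so f has a one-parameter family of period-three orbits and hence bounded orbits. -/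
open Matrix

theorem stmt17
    (A : Matrix (Fin 3) (Fin 3) ℝ)
    (hA : A = !![-1/2, 1, 0; -1/2, 0, 0; -11/28, 0, 1])
    (b c : Fin 3 → ℝ)
    (hb : b = ![-1/2, -1, 3/28]) (hc : c = ![1, 0, 0])
    (f : (Fin 3 → ℝ) → (Fin 3 → ℝ))
    (hf : ∀ x : Fin 3 → ℝ, f x = A.mulVec x + |x 0| • b + c) :
    (∀ y : Fin 3 → ℝ, f y ≠ y) ∧
    (∀ s : ℝ, f^[3] ![-2/15, -7/5, s] = ![-2/15, -7/5, s]) := by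
  subst hA hb hc
  constructor
  · intro y hy
    rw [hf] at hy
    have h0 := congrFun hy 0
    have h1 := congrFun hy 1
    have h2 := congrFun hy 2
    simp [Matrix.mulVec, dotProduct, Fin.sum_univ_three] at h0 h1 h2
    have hy0 : y 0 = 0 := by
      rcases abs_cases (y 0) with ⟨ha, _⟩ | ⟨ha, _⟩ <;> rw [ha] at h2 <;> linarith
    rw [hy0] at h0 h1
    simp at h0 h1
    linarith
  · intro s
    have habs1 : |(-2/15 : ℝ)| = 2/15 := by
      rw [abs_of_neg (by norm_num : (-2/15:ℝ) < 0)]; norm_num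
    have habs2 : |(-2/5 : ℝ)| = 2/5 := by
      rw [abs_of_neg (by norm_num : (-2/5:ℝ) < 0)]; norm_num
    have habs3 : |(14/15 : ℝ)| = 14/15 := by
      rw [abs_of_pos (by norm_num : (0:ℝ) < 14/15)]
    have e1 : f ![-2/15, -7/5, s] = ![-2/5, -1/15, s + 1/15] := by
      rw [hf]; funext i; fin_cases i <;>
        simp [Matrix.mulVec, dotProduct, Fin.sum_univ_three, habs1, Matrix.vecHead, Matrix.vecTail] <;> ring
    have e2 : f ![-2/5, -1/15, s + 1/15] = ![14/15, -1/5, s + 4/15] := by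
      rw [hf]; funext i; fin_cases i <;>
        simp [Matrix.mulVec, dotProduct, Fin.sum_univ_three, habs2, Matrix.vecHead, Matrix.vecTail] <;> ring
    have e3 : f ![14/15, -1/5, s + 4/15] = ![-2/15, -7/5, s] := by
      rw [hf]; funext i; fin_cases i <;>
        simp [Matrix.mulVec, dotProduct, Fin.sum_univ_three, habs3, Matrix.vecHead, Matrix.vecTail] <;> ring
    show f (f (f _)) = _
    rw [e1, e2, e3]
end
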